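/- For every λ > 0 satisfying (9λ+15)(cos√λ - sin(√λ)/√λ) + 5λ(√λ sin√λ + cos√λ) = 0, the function y_λ(x) = cos(√λ x) - sin(√λ x)/√λ satisfies ∫₀¹ (x³/6 - x²/2 - x/10 + 1/10)·y_λ(x) dx = 0. -/

import Mathlib

open MeasureTheory

/-- Example 2 orthogonality: for every positive eigenvalue `λ` of the problem
`-y'' = λy`, `y(0) = -y'(0)`, `(9λ+15) y(1) = 5λ y'(1)` (i.e. every `λ > 0` with
`(9λ+15)(cos√λ - sin√λ/√λ) + 5λ(√λ sin√λ + cos√λ) = 0`), the function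
`x³/6 - x²/2 - x/10 + 1/10` is orthogonal to the eigenfunction
`cos(√λ x) - sin(√λ x)/√λ`. -/
theorem example_two_orthogonality (lam : ℝ) (hpos : 0 < lam)
    (heig : (9 * lam + 15)
        * (Real.cos (Real.sqrt lam) - Real.sin (Real.sqrt lam) / Real.sqrt lam)
      + 5 * lam * (Real.sqrt lam * Real.sin (Real.sqrt lam)
        + Real.cos (Real.sqrt lam)) = 0) :
    ∫ x in (0:ℝ)..1, (x ^ 3 / 6 - x ^ 2 / 2 - x / 10 + 1 / 10)
      * (Real.cos (Real.sqrt lam * x) - Real.sin (Real.sqrt lam * x) / Real.sqrt lam)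
      = 0 := by
  set s := Real.sqrt lam with hsdef
  have hs : 0 < s := Real.sqrt_pos.mpr hpos
  have hs0 : s ≠ 0 := ne_of_gt hs
  have hlam : lam = s ^ 2 := (Real.sq_sqrt hpos.le).symm
  -- antiderivative
  set F : ℝ → ℝ := fun x => Real.sin (s * x) *
      ((x ^ 3 / 6 - x ^ 2 / 2 - x / 10 + 1 / 10) / s
        - (x ^ 2 / 2 - x - 1 / 10) / s ^ 3 - (x - 1) / s ^ 3 + 1 / s ^ 5)
    + Real.cos (s * x) *
      ((x ^ 3 / 6 - x ^ 2 / 2 - x / 10 + 1 / 10 + (x ^ 2 / 2 - x - 1 / 10)) / s ^ 2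
        - (x - 1) / s ^ 4 - 1 / s ^ 4) with hF
  have hderiv : ∀ x ∈ Set.uIcc (0:ℝ) 1, HasDerivAt F
      ((x ^ 3 / 6 - x ^ 2 / 2 - x / 10 + 1 / 10)
        * (Real.cos (s * x) - Real.sin (s * x) / s)) x := by
    intro x _
    have hsin : HasDerivAt (fun x => Real.sin (s * x)) (Real.cos (s * x) * s) x :=
      (Real.hasDerivAt_sin (s * x)).comp x ((hasDerivAt_id x).const_mul s) |>.congr_deriv (by ring)
    have hcos : HasDerivAt (fun x => Real.cos (s * x)) (-Real.sin (s * x) * s) x :=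
      (Real.hasDerivAt_cos (s * x)).comp x ((hasDerivAt_id x).const_mul s) |>.congr_deriv (by ring)
    have hA : HasDerivAt (fun x : ℝ => (x ^ 3 / 6 - x ^ 2 / 2 - x / 10 + 1 / 10) / s
        - (x ^ 2 / 2 - x - 1 / 10) / s ^ 3 - (x - 1) / s ^ 3 + 1 / s ^ 5)
        ((x ^ 2 / 2 - x - 1 / 10) / s - (x - 1) / s ^ 3 - 1 / s ^ 3) x := by
      have h3 : HasDerivAt (fun x : ℝ => x ^ 3) (3 * x ^ 2) x := by
        simpa using hasDerivAt_pow 3 x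
      have h2 : HasDerivAt (fun x : ℝ => x ^ 2) (2 * x) x := by
        simpa using hasDerivAt_pow 2 x
      have h1 : HasDerivAt (fun x : ℝ => x) 1 x := hasDerivAt_id x
      have := ((((((h3.div_const 6).sub (h2.div_const 2)).sub (h1.div_const 10)).add_const
          (1/10 : ℝ)).div_const s).sub
          ((((h2.div_const 2).sub h1).sub_const (1/10 : ℝ)).div_const (s^3))).sub
          ((h1.sub_const 1).div_const (s^3)) |>.add_const (1 / s ^ 5)
      refine this.congr_deriv ?_
      ring
    have hB : HasDerivAt (fun x : ℝ =>
        (x ^ 3 / 6 - x ^ 2 / 2 - x / 10 + 1 / 10 + (x ^ 2 / 2 - x - 1 / 10)) / s ^ 2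
          - (x - 1) / s ^ 4 - 1 / s ^ 4)
        ((x ^ 2 / 2 - x - 1 / 10 + (x - 1)) / s ^ 2 - 1 / s ^ 4) x := by
      have h3 : HasDerivAt (fun x : ℝ => x ^ 3) (3 * x ^ 2) x := by
        simpa using hasDerivAt_pow 3 x
      have h2 : HasDerivAt (fun x : ℝ => x ^ 2) (2 * x) x := by
        simpa using hasDerivAt_pow 2 x
      have h1 : HasDerivAt (fun x : ℝ => x) 1 x := hasDerivAt_id x
      have := (((((((h3.div_const 6).sub (h2.div_const 2)).sub (h1.div_const 10)).add_const
          (1/10 : ℝ)).add (((h2.div_const 2).sub h1).sub_const (1/10 : ℝ))).div_const (s^2)).sub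
          ((h1.sub_const 1).div_const (s^4))).sub_const (1 / s ^ 4)
      refine this.congr_deriv ?_
      ring
    have hFd := (hsin.mul hA).add (hcos.mul hB)
    rw [hF]
    refine hFd.congr_deriv ?_
    field_simp
    ring
  have hcont : IntervalIntegrable (fun x => (x ^ 3 / 6 - x ^ 2 / 2 - x / 10 + 1 / 10)
      * (Real.cos (s * x) - Real.sin (s * x) / s)) volume 0 1 := by
    apply Continuous.intervalIntegrable
    fun_prop
  have hint := intervalIntegral.integral_eq_sub_of_hasDerivAt hderiv hcont
  rw [hint, hF]
  simp only [mul_one, mul_zero, Real.sin_zero, Real.cos_zero]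
  rw [hlam] at heig
  have key : (Real.sin s *
        ((1 ^ 3 / 6 - 1 ^ 2 / 2 - 1 / 10 + 1 / 10) / s - ((1:ℝ) ^ 2 / 2 - 1 - 1 / 10) / s ^ 3
          - ((1:ℝ) - 1) / s ^ 3 + 1 / s ^ 5)
    + Real.cos s *
        ((1 ^ 3 / 6 - 1 ^ 2 / 2 - 1 / 10 + 1 / 10 + ((1:ℝ) ^ 2 / 2 - 1 - 1 / 10)) / s ^ 2
          - ((1:ℝ) - 1) / s ^ 4 - 1 / s ^ 4))
    - (0 * ((0 ^ 3 / 6 - 0 ^ 2 / 2 - 0 / 10 + 1 / 10) / s - ((0:ℝ) ^ 2 / 2 - 0 - 1 / 10) / s ^ 3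
          - ((0:ℝ) - 1) / s ^ 3 + 1 / s ^ 5)
      + 1 * ((0 ^ 3 / 6 - 0 ^ 2 / 2 - 0 / 10 + 1 / 10 + ((0:ℝ) ^ 2 / 2 - 0 - 1 / 10)) / s ^ 2
          - ((0:ℝ) - 1) / s ^ 4 - 1 / s ^ 4))
    = -(1 / (15 * s ^ 4)) * ((9 * s ^ 2 + 15) * (Real.cos s - Real.sin s / s)
        + 5 * s ^ 2 * (s * Real.sin s + Real.cos s)) := by
    field_simp
    ring
  rw [heig, mul_zero] at key
  linear_combination key
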